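/- For any class of Kripke frames F and natural numbers i, j, k, l: the global consequence ◇ⁱ□ʲφ ⊨^g_F □ᵏ◇ˡφ holds for all formulas φ if and only if every frame (W,R) in F satisfies ∀w ∀x ∃y ∀z ∃u (Rᵏwx ∧ Rⁱyz → Rˡxu ∧ Rʲzu). -/

import Mathlib

/-- Formulas of the basic modal language. -/
inductive Form : Type where
  | var : ℕ → Form
  | bot : Form
  | imp : Form → Form → Form
  | box : Form → Form

def Form.neg (φ : Form) : Form := .imp φ .bot
def Form.dia (φ : Form) : Form := .neg (.box (.neg φ))
def Form.or (φ ψ : Form) : Form := .imp (.neg φ) ψ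
def Form.and (φ ψ : Form) : Form := .neg (.imp φ (.neg ψ))

/-- A Kripke frame: a nonempty set of worlds with an accessibility relation. -/
structure Frame : Type 1 where
  W : Type
  R : W → W → Prop
  nonempty : Nonempty W

/-- Truth at a world of a model. -/
def Frame.sat (F : Frame) (V : ℕ → F.W → Prop) : F.W → Form → Prop
  | w, .var n => V n w
  | _, .bot => False
  | w, .imp φ ψ => F.sat V w φ → F.sat V w ψ
  | w, .box φ => ∀ u, F.R w u → F.sat V u φ

/-- Local consequence with respect to a class of frames. -/
def localConseq (C : Frame → Prop) (Γ : Set Form) (φ : Form) : Prop :=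
  ∀ F, C F → ∀ V : ℕ → F.W → Prop, ∀ w : F.W,
    (∀ ψ ∈ Γ, F.sat V w ψ) → F.sat V w φ

/-- Global consequence with respect to a class of frames. -/
def globalConseq (C : Frame → Prop) (Γ : Set Form) (φ : Form) : Prop :=
  ∀ F, C F → ∀ V : ℕ → F.W → Prop,
    (∀ ψ ∈ Γ, ∀ w : F.W, F.sat V w ψ) → ∀ w : F.W, F.sat V w φ

/-- □ⁿφ -/
def boxIter : ℕ → Form → Form
  | 0, φ => φ
  | n+1, φ => .box (boxIter n φ)

/-- ◇ⁿφ -/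
def diaIter : ℕ → Form → Form
  | 0, φ => φ
  | n+1, φ => .dia (diaIter n φ)

/-- □^ωΓ = {□ⁿψ | n ∈ ℕ, ψ ∈ Γ} -/
def boxOmega (Γ : Set Form) : Set Form :=
  {χ | ∃ n ψ, ψ ∈ Γ ∧ χ = boxIter n ψ}

/-- The subframe of `F` generated by the point `w`. -/
def Frame.gen (F : Frame) (w : F.W) : Frame where
  W := {v : F.W // Relation.ReflTransGen F.R w v}
  R a b := F.R a.1 b.1
  nonempty := ⟨⟨w, Relation.ReflTransGen.refl⟩⟩

/-- A class of frames is closed under point-generated subframes. -/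
def closedGen (C : Frame → Prop) : Prop :=
  ∀ F, C F → ∀ w : F.W, C (F.gen w)

/-- Modal-free (purely propositional) formulas. -/
def modalFree : Form → Prop
  | .var _ => True
  | .bot => True
  | .imp φ ψ => modalFree φ ∧ modalFree ψ
  | .box _ => False

/-- n-fold composition of a relation (R⁰ is the identity). -/
def relIter {W : Type} (R : W → W → Prop) : ℕ → W → W → Prop
  | 0 => Eq
  | n+1 => fun a c => ∃ b, R a b ∧ relIter R n b c

/-!
Both formulas have first-order truth conditions along `R`-paths: `◇ⁱ□ʲφ` holds at `y` iff some
`Rⁱ`-successor `z` of `y` has `φ` at all its `Rʲ`-successors, and `□ᵏ◇ˡφ` holds at `w` iff every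
`Rᵏ`-successor `x` of `w` sees `φ` at some `Rˡ`-successor. So the frame condition is exactly what
transports the global premise at `y` to the conclusion at `x`. Conversely, for a failing pair `w, x`
make `p` false precisely on the `Rˡ`-successors of `x`: the failure of the condition makes `◇ⁱ□ʲp`
true everywhere, while `□ᵏ◇ˡp` fails at `w`.
-/

namespace Frame

variable (F : Frame) (V : ℕ → F.W → Prop)

def GlobalConfluent (i j k l : ℕ) : Prop :=
  ∀ w x : F.W, ∃ y : F.W, ∀ z : F.W, ∃ u : F.W,
    relIter F.R k w x ∧ relIter F.R i y z → relIter F.R l x u ∧ relIter F.R j z u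

theorem sat_dia (w : F.W) (φ : Form) :
    F.sat V w φ.dia ↔ ∃ u, F.R w u ∧ F.sat V u φ := by
  simp only [Form.dia, Form.neg, Frame.sat, imp_false, not_forall, not_not, exists_prop]

theorem sat_boxIter (φ : Form) (n : ℕ) (w : F.W) :
    F.sat V w (boxIter n φ) ↔ ∀ u, relIter F.R n w u → F.sat V u φ := by
  induction n generalizing w with
  | zero => simp [boxIter, relIter]
  | succ n ih =>
    simp only [boxIter, Frame.sat, relIter, ih]
    grind

theorem sat_diaIter (φ : Form) (n : ℕ) (w : F.W) :
    F.sat V w (diaIter n φ) ↔ ∃ u, relIter F.R n w u ∧ F.sat V u φ := by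
  induction n generalizing w with
  | zero => simp [diaIter, relIter]
  | succ n ih =>
    simp only [diaIter, sat_dia, relIter, ih]
    grind

variable {F}

theorem sat_boxIter_diaIter_of_globalConfluent {i j k l : ℕ} (hF : F.GlobalConfluent i j k l)
    (φ : Form) (hprem : ∀ y, F.sat V y (diaIter i (boxIter j φ))) (w : F.W) :
    F.sat V w (boxIter k (diaIter l φ)) := by
  refine (F.sat_boxIter V _ k w).2 fun x hwx => ?_
  obtain ⟨y, hy⟩ := hF w x
  obtain ⟨z, hyz, hz⟩ := (F.sat_diaIter V _ i y).1 (hprem y)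
  obtain ⟨u, hu⟩ := hy z
  obtain ⟨hxu, hzu⟩ := hu ⟨hwx, hyz⟩
  exact (F.sat_diaIter V _ l x).2 ⟨u, hxu, (F.sat_boxIter V _ j z).1 hz _ hzu⟩

theorem globalConfluent_of_sat {i j k l : ℕ}
    (h : ∀ V : ℕ → F.W → Prop, (∀ y, F.sat V y (diaIter i (boxIter j (.var 0)))) →
      ∀ w, F.sat V w (boxIter k (diaIter l (.var 0)))) :
    F.GlobalConfluent i j k l := by
  intro w x
  by_contra hfail
  push Not at hfail
  let V : ℕ → F.W → Prop := fun _ u => ¬ relIter F.R l x u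
  have hprem : ∀ y, F.sat V y (diaIter i (boxIter j (.var 0))) := by
    intro y
    obtain ⟨z, hz⟩ := hfail y
    refine (F.sat_diaIter V _ i y).2 ⟨z, (hz z).1.2, (F.sat_boxIter V _ j z).2 ?_⟩
    exact fun u hzu hxu => (hz u).2 hxu hzu
  obtain ⟨z, hz⟩ := hfail w
  have hwx : relIter F.R k w x := (hz x).1.1
  obtain ⟨u, hxu, hu⟩ := (F.sat_diaIter V _ l x).1 ((F.sat_boxIter V _ k w).1 (h V hprem w) x hwx)
  exact hu hxu

end Frame

/-- the general global correspondence result: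
◇ⁱ□ʲφ ⊨^g_F □ᵏ◇ˡφ for all φ iff every frame in F satisfies
∀w ∀x ∃y ∀z ∃u (Rᵏwx ∧ Rⁱyz → Rˡxu ∧ Rʲzu). -/
theorem stmt16 (C : Frame → Prop) (i j k l : ℕ) :
    (∀ φ : Form,
      globalConseq C {diaIter i (boxIter j φ)} (boxIter k (diaIter l φ))) ↔
    ∀ F, C F → ∀ w x : F.W, ∃ y : F.W, ∀ z : F.W, ∃ u : F.W,
      relIter F.R k w x ∧ relIter F.R i y z →
        relIter F.R l x u ∧ relIter F.R j z u := by
  refine ⟨fun h F hF => Frame.globalConfluent_of_sat fun V hprem => ?_,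
    fun h φ F hF V hprem => Frame.sat_boxIter_diaIter_of_globalConfluent V (h F hF) φ ?_⟩
  · exact h (.var 0) F hF V (by simpa using hprem)
  · simpa using hprem
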